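/- arXiv:2301.00919 — 4 statements merged into one kernel-verified Lean document; each statement's English description precedes it below -/
import Mathlib

section
/- There exist an absolute constant C > 0 and a natural number m (the paper obtains m = 5) such that for every measurable G : ℝ³ → [0,∞) with ‖G‖_{L¹(ℝ³)} = 1 and k := max{1, ‖⟨·⟩²G‖_{L²(ℝ³)}} < ∞, and for every v ∈ ℝ³: ∫_{ℝ³} G(v−v')/|v'| dv' ≥ 1/(C k^m ⟨v⟩). -/
open MeasureTheory Real

noncomputable section

abbrev E3 := EuclideanSpace ℝ (Fin 3)

/-- Landau collision kernel entries. -/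
def Phi (z : E3) (i j : Fin 3) : ℝ :=
  (if i = j then (1 : ℝ) else 0) / ‖z‖ - z i * z j / ‖z‖ ^ 3

/-- Japanese bracket of a vector. -/
def jap (v : E3) : ℝ := Real.sqrt (1 + ‖v‖ ^ 2)

/-- Japanese bracket of a real number. -/
def japR (r : ℝ) : ℝ := Real.sqrt (1 + r ^ 2)

/-- Maxwellian with inverse temperature `q`. -/
def maxw (q : ℝ) (ξ : E3) : ℝ :=
  (q / (2 * π)) ^ ((3 : ℝ) / 2) * Real.exp (-q * ‖ξ‖ ^ 2 / 2)

def sqMaxw (q : ℝ) (ξ : E3) : ℝ := Real.sqrt (maxw q ξ)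

/-- Entrywise convolution `(Φ_{ij} ∗ G)(v)`. -/
def convPhi (G : E3 → ℝ) (i j : Fin 3) (v : E3) : ℝ := ∫ w : E3, Phi (v - w) i j * G w

/-- `σ_{ij} = Φ_{ij} ∗ μ` with `μ = μ₁` the standard Maxwellian. -/
def sigmaM (i j : Fin 3) (v : E3) : ℝ := convPhi (maxw 1) i j v

/-- Orthogonal projection onto `span {v}`. -/
def projPar (v u : E3) : E3 := ((inner ℝ u v : ℝ) / ‖v‖ ^ 2) • v

/-- Orthogonal projection onto `{v}ᗮ`. -/
def projPerp (v u : E3) : E3 := u - projPar v u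

/-- Cone of points making angle less than `θ` with the line spanned by `ν`. -/
def Acone (ν : E3) (θ : ℝ) : Set E3 := {w : E3 | ‖projPerp ν w‖ < Real.sin θ * ‖w‖}

def e3 (i : Fin 3) : E3 := EuclideanSpace.single i 1

/-- Partial derivative in direction `i`. -/
def pd (i : Fin 3) (f : E3 → ℝ) (v : E3) : ℝ := fderiv ℝ f v (e3 i)

/-- The Landau collision operator in divergence form. -/
def Qop (G₁ G₂ : E3 → ℝ) (v : E3) : ℝ :=
  ∑ i, pd i (fun w => ∑ j, ∫ w' : E3,
    Phi (w - w') i j * (G₁ w' * pd j G₂ w - G₂ w * pd j G₁ w')) v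

/-- Rescaled electron–ion collision operator `Q^ε_{−+}`. -/
def Qmp (ε : ℝ) (G₁ G₂ : E3 → ℝ) (v : E3) : ℝ :=
  ∑ i, pd i (fun w => ∑ j, ∫ ξ' : E3,
    Phi (ε • w - ξ') i j * (ε * G₁ ξ' * pd j G₂ w - G₂ w * pd j G₁ ξ')) v

/-- Rescaled ion–electron collision operator `Q^ε_{+−}`. -/
def Qpm (ε : ℝ) (G₁ G₂ : E3 → ℝ) (ξ : E3) : ℝ :=
  ∑ i, pd i (fun w => ∑ j, ∫ v' : E3,
    Phi (w - ε • v') i j * (G₁ v' * pd j G₂ w - ε * G₂ w * pd j G₁ v')) ξ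

def lap (f : E3 → ℝ) (x : E3) : ℝ := ∑ i, pd i (pd i f) x

/-- Fundamental domain for the torus `𝕋³ = (ℝ/ℤ)³`. -/
def cube : Set E3 := {x : E3 | ∀ i, x i ∈ Set.Ico (0 : ℝ) 1}

def L2norm (ψ : E3 → ℝ) : ℝ := Real.sqrt (∫ v : E3, ψ v ^ 2)

def L2ip (f g : E3 → ℝ) : ℝ := ∫ v : E3, f v * g v

/-- Square of the `H_σ` norm. -/
def HsigSq (ψ : E3 → ℝ) : ℝ :=
  (∫ v : E3, ∑ i, ∑ j, sigmaM i j v * pd i ψ v * pd j ψ v) +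
    ∫ v : E3, (∑ i, sigmaM i i v) * ψ v ^ 2

def HsigNorm (ψ : E3 → ℝ) : ℝ := Real.sqrt (HsigSq ψ)

/-- Square of the `H⁻_{σ;ε}` seminorm. -/
def HminSq (ε : ℝ) (ψ : E3 → ℝ) : ℝ :=
  ε⁻¹ * ∫ ξ : E3, ∑ i, ∑ j, sigmaM i j (ε⁻¹ • ξ) * pd i ψ ξ * pd j ψ ξ

def HminNorm (ε : ℝ) (ψ : E3 → ℝ) : ℝ := Real.sqrt (HminSq ε ψ)

/-- Orthogonal `L²` projection onto
`span {μ_γ^{1/2}, ξ₁μ_γ^{1/2}, ξ₂μ_γ^{1/2}, ξ₃μ_γ^{1/2}, |ξ|²μ_γ^{1/2}}`, computed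
via the orthonormal basis `μ_γ^{1/2}, √γ ξ_i μ_γ^{1/2}, (γ|ξ|²−3)/√6 μ_γ^{1/2}`. -/
def Pgam (γ : ℝ) (h : E3 → ℝ) (ξ : E3) : ℝ :=
  (∫ ζ : E3, h ζ * sqMaxw γ ζ) * sqMaxw γ ξ +
  (∑ i, (∫ ζ : E3, h ζ * (Real.sqrt γ * ζ i * sqMaxw γ ζ)) * (Real.sqrt γ * ξ i * sqMaxw γ ξ)) +
  (∫ ζ : E3, h ζ * ((γ * ‖ζ‖ ^ 2 - 3) / Real.sqrt 6 * sqMaxw γ ζ)) *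
    ((γ * ‖ξ‖ ^ 2 - 3) / Real.sqrt 6 * sqMaxw γ ξ)

def PgamPerp (γ : ℝ) (h : E3 → ℝ) (ξ : E3) : ℝ := h ξ - Pgam γ h ξ

/-- Linearized Landau operator `ℒ_γ` (nonnegative sign convention). -/
def Lgam (γ : ℝ) (h : E3 → ℝ) (ξ : E3) : ℝ :=
  -(sqMaxw γ ξ)⁻¹ *
    (Qop (fun w => sqMaxw γ w * h w) (maxw γ) ξ + Qop (maxw γ) (fun w => sqMaxw γ w * h w) ξ)

/-- Two-temperature linearized operator `ℒ̃_{γ,q}`. -/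
def Ltil (γ q : ℝ) (h : E3 → ℝ) (ξ : E3) : ℝ :=
  -(sqMaxw q ξ)⁻¹ *
    (Qop (fun w => sqMaxw q w * h w) (maxw γ) ξ + Qop (maxw γ) (fun w => sqMaxw q w * h w) ξ)

/-- Nonlinear collision form `Γ_q`. -/
def Gamq (q : ℝ) (h₁ h₂ : E3 → ℝ) (ξ : E3) : ℝ :=
  -(sqMaxw q ξ)⁻¹ * Qop (fun w => sqMaxw q w * h₁ w) (fun w => sqMaxw q w * h₂ w) ξ

/-- Linearized ion–electron operator `ℳ_{q,G}` (nonnegative sign convention). -/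
def Mqg (ε q : ℝ) (G h : E3 → ℝ) (ξ : E3) : ℝ :=
  -(sqMaxw q ξ)⁻¹ * Qpm ε G (fun w => sqMaxw q w * h w) ξ

/-! Cauchy–Schwarz against the weight `⟨w⟩⁻²` bounds the mass of `G` outside the ball of
radius `R` by `k · (∫_{|w|>R} ⟨w⟩⁻⁴)^{1/2} ≲ k ⟨R⟩^{-1/4}`, so a ball of radius `R ≍ k⁴` carries
at least half of the mass. Since `|w| ≤ |v| + R` whenever `|v - w| ≤ R`, this gives
`∫ G(v - w)/|w| dw ≥ (1/2)/(|v| + R) ≳ 1/(k⁴⟨v⟩)`. The integral is a genuine (not junk) value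
because `G ∈ L¹ ∩ L²` and `|w|⁻²` is locally integrable in dimension three. -/

open Metric Module

section CauchySchwarz

variable {α : Type*} [MeasurableSpace α] {μ : Measure α}

lemma integral_mul_le_sqrt_mul_sqrt {f g : α → ℝ} (hf0 : 0 ≤ᵐ[μ] f) (hg0 : 0 ≤ᵐ[μ] g)
    (hf : MemLp f 2 μ) (hg : MemLp g 2 μ) :
    ∫ x, f x * g x ∂μ ≤ √(∫ x, f x ^ 2 ∂μ) * √(∫ x, g x ^ 2 ∂μ) := by
  have h := integral_mul_le_Lp_mul_Lq_of_nonneg Real.HolderConjugate.two_two hf0 hg0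
    (by simpa using hf) (by simpa using hg)
  simpa only [Real.rpow_two, Real.sqrt_eq_rpow] using h

lemma setIntegral_le_sqrt_mul_sqrt_of_pos {G ρ : α → ℝ} {s : Set α}
    (hG0 : ∀ x, 0 ≤ G x) (hρ : ∀ x, 0 < ρ x) (hρm : Measurable ρ)
    (hGm : AEStronglyMeasurable G μ) (hρs : IntegrableOn (fun x => (ρ x)⁻¹ ^ 2) s μ)
    (hρG : Integrable (fun x => (ρ x * G x) ^ 2) μ) :
    ∫ x in s, G x ∂μ ≤ √(∫ x in s, (ρ x)⁻¹ ^ 2 ∂μ) * √(∫ x, (ρ x * G x) ^ 2 ∂μ) := by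
  calc ∫ x in s, G x ∂μ = ∫ x in s, (ρ x)⁻¹ * (ρ x * G x) ∂μ := by
        simp_rw [inv_mul_cancel_left₀ (hρ _).ne']
    _ ≤ √(∫ x in s, (ρ x)⁻¹ ^ 2 ∂μ) * √(∫ x in s, (ρ x * G x) ^ 2 ∂μ) :=
        integral_mul_le_sqrt_mul_sqrt (ae_of_all _ fun x => (inv_pos.2 (hρ x)).le)
          (ae_of_all _ fun x => mul_nonneg (hρ x).le (hG0 x))
          ((memLp_two_iff_integrable_sq hρm.inv.aestronglyMeasurable).2 hρs)
          ((memLp_two_iff_integrable_sq (hρm.aestronglyMeasurable.mul hGm).restrict).2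
            hρG.integrableOn)
    _ ≤ _ := mul_le_mul_of_nonneg_left (Real.sqrt_le_sqrt
        (setIntegral_le_integral hρG (ae_of_all _ fun x => sq_nonneg _))) (Real.sqrt_nonneg _)

end CauchySchwarz

section HaarMeasure

variable {E : Type*} [NormedAddCommGroup E] [NormedSpace ℝ E] [FiniteDimensional ℝ E]
  [MeasurableSpace E] [BorelSpace E] {μ : Measure E} [μ.IsAddHaarMeasure]

lemma integrable_div_norm_of_sq (hd : 2 < finrank ℝ E) {f : E → ℝ} (hf : Integrable f μ)
    (hf2 : Integrable (fun w => f w ^ 2) μ) : Integrable (fun w => f w / ‖w‖) μ := by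
  have hsing : IntegrableOn (fun w : E => ‖w‖ ^ (-2 : ℝ)) (ball 0 1) μ :=
    integrableOn_ball_of_norm_le_rpow (C := 1) (α := 2) (by omega) (by exact_mod_cast hd)
      (ae_of_all _ fun w => by simp)
      (measurable_norm.pow_const _).aestronglyMeasurable
  refine ((hf2.add (hsing.integrable_indicator measurableSet_ball)).add hf.abs).mono'
    (hf.aemeasurable.div measurable_norm.aemeasurable).aestronglyMeasurable
    (ae_of_all _ fun w => ?_)
  rw [Real.norm_eq_abs, abs_div, abs_norm, Pi.add_apply, Pi.add_apply]
  by_cases hw : w ∈ ball (0 : E) 1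
  · rw [Set.indicator_of_mem hw, Real.rpow_neg (norm_nonneg w), Real.rpow_two, div_eq_mul_inv,
      ← inv_pow]
    nlinarith [sq_nonneg (|f w| - ‖w‖⁻¹), sq_abs (f w), abs_nonneg (f w)]
  · rw [Set.indicator_of_notMem hw]
    have h1 : 1 ≤ ‖w‖ := by simpa using hw
    linarith [div_le_self (abs_nonneg (f w)) h1, sq_nonneg (f w)]

lemma setIntegral_closedBall_div_le_integral_div_norm [Nontrivial E] {G : E → ℝ}
    (hG0 : ∀ w, 0 ≤ G w) (hG : Integrable G μ) (v : E)
    (hconv : Integrable (fun w => G (v - w) / ‖w‖) μ) (R : ℝ) :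
    (∫ w in closedBall (0 : E) R, G w ∂μ) / (‖v‖ + R) ≤ ∫ w, G (v - w) / ‖w‖ ∂μ := by
  calc (∫ w in closedBall (0 : E) R, G w ∂μ) / (‖v‖ + R)
      = ∫ w, (closedBall (0 : E) R).indicator G (v - w) / (‖v‖ + R) ∂μ := by
        rw [integral_div, integral_sub_left_eq_self _ μ v,
          integral_indicator measurableSet_closedBall]
    _ ≤ _ := by
        refine integral_mono_ae
          (((hG.indicator measurableSet_closedBall).comp_sub_left v).div_const _) hconv ?_
        filter_upwards [Measure.ae_ne μ 0] with w hw
        by_cases hvw : v - w ∈ closedBall (0 : E) R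
        · rw [Set.indicator_of_mem hvw]
          refine div_le_div_of_nonneg_left (hG0 _) (norm_pos_iff.2 hw) ?_
          have : ‖v - w‖ ≤ R := by simpa using hvw
          calc ‖w‖ = ‖v - (v - w)‖ := by rw [sub_sub_cancel]
            _ ≤ ‖v‖ + ‖v - w‖ := norm_sub_le _ _
            _ ≤ ‖v‖ + R := by linarith
        · rw [Set.indicator_of_notMem hvw, zero_div]
          exact div_nonneg (hG0 _) (norm_nonneg _)

lemma integrable_inv_one_add_norm_sq_sq (hd : (finrank ℝ E : ℝ) < 4) :
    Integrable (fun w : E => (1 + ‖w‖ ^ 2)⁻¹ ^ 2) μ := by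
  refine (integrable_rpow_neg_one_add_norm_sq hd).congr (ae_of_all _ fun w => ?_)
  dsimp only
  rw [show (-4 / 2 : ℝ) = -(2 : ℕ) by norm_num, Real.rpow_neg (by positivity), Real.rpow_natCast,
    inv_pow]

lemma setIntegral_compl_closedBall_inv_one_add_norm_sq_sq_le {r R : ℝ}
    (hr : (finrank ℝ E : ℝ) < r) (hr4 : r ≤ 4) (hR : 0 ≤ R) :
    ∫ w in (closedBall (0 : E) R)ᶜ, (1 + ‖w‖ ^ 2)⁻¹ ^ 2 ∂μ ≤
      (1 + R ^ 2) ^ (-(4 - r) / 2) * ∫ w, (1 + ‖w‖ ^ 2) ^ (-r / 2) ∂μ := by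
  have hint := integrable_rpow_neg_one_add_norm_sq (μ := μ) hr
  calc ∫ w in (closedBall (0 : E) R)ᶜ, (1 + ‖w‖ ^ 2)⁻¹ ^ 2 ∂μ
      ≤ ∫ w in (closedBall (0 : E) R)ᶜ,
          (1 + R ^ 2) ^ (-(4 - r) / 2) * (1 + ‖w‖ ^ 2) ^ (-r / 2) ∂μ := by
        refine setIntegral_mono_on
          (integrable_inv_one_add_norm_sq_sq (hr.trans_le hr4)).integrableOn
          (hint.const_mul _).integrableOn measurableSet_closedBall.compl fun w hw => ?_
        have hRw : R ≤ ‖w‖ := by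
          simp only [Set.mem_compl_iff, mem_closedBall, dist_zero_right, not_le] at hw
          exact hw.le
        have hw0 : 0 < 1 + ‖w‖ ^ 2 := by positivity
        calc (1 + ‖w‖ ^ 2)⁻¹ ^ 2 = (1 + ‖w‖ ^ 2) ^ (-(4 - r) / 2) * (1 + ‖w‖ ^ 2) ^ (-r / 2) := by
              rw [← Real.rpow_add hw0, show -(4 - r) / 2 + -r / 2 = -(2 : ℕ) by ring,
                Real.rpow_neg hw0.le, Real.rpow_natCast, inv_pow]
          _ ≤ _ := mul_le_mul_of_nonneg_right
              (Real.rpow_le_rpow_of_nonpos (by positivity) (by gcongr) (by linarith))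
              (by positivity)
    _ = (1 + R ^ 2) ^ (-(4 - r) / 2) *
          ∫ w in (closedBall (0 : E) R)ᶜ, (1 + ‖w‖ ^ 2) ^ (-r / 2) ∂μ := integral_const_mul _ _
    _ ≤ _ := mul_le_mul_of_nonneg_left
        (setIntegral_le_integral hint (ae_of_all _ fun w => by positivity)) (by positivity)

lemma one_add_sq_sq_rpow_neg_quarter_le_inv {y : ℝ} (hy : 0 < y) :
    (1 + (y ^ 2) ^ 2) ^ (-(1 / 4 : ℝ)) ≤ y⁻¹ := by
  calc (1 + (y ^ 2) ^ 2) ^ (-(1 / 4 : ℝ)) ≤ ((y ^ 2) ^ 2) ^ (-(1 / 4 : ℝ)) :=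
        Real.rpow_le_rpow_of_nonpos (by positivity) (by linarith) (by norm_num)
    _ = y⁻¹ := by
        rw [← pow_mul, ← Real.rpow_natCast, ← Real.rpow_mul hy.le]
        norm_num [Real.rpow_neg_one]

lemma half_le_setIntegral_closedBall (hd : (finrank ℝ E : ℝ) < 7 / 2) {G : E → ℝ}
    (hG0 : ∀ w, 0 ≤ G w) (hG : Integrable G μ) (hG1 : ∫ w, G w ∂μ = 1)
    (hGw : Integrable (fun w => ((1 + ‖w‖ ^ 2) * G w) ^ 2) μ) {k y : ℝ} (hk : 0 < k)
    (hGk : √(∫ w, ((1 + ‖w‖ ^ 2) * G w) ^ 2 ∂μ) ≤ k) (hy : 0 < y)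
    (hky : 4 * k ^ 2 * ∫ w, (1 + ‖w‖ ^ 2) ^ (-(7 / 2 : ℝ) / 2) ∂μ ≤ y) :
    1 / 2 ≤ ∫ w in closedBall (0 : E) (y ^ 2), G w ∂μ := by
  set B := ∫ w, (1 + ‖w‖ ^ 2) ^ (-(7 / 2 : ℝ) / 2) ∂μ
  set s := closedBall (0 : E) (y ^ 2)
  have hweight : ∫ w in sᶜ, (1 + ‖w‖ ^ 2)⁻¹ ^ 2 ∂μ ≤ (1 / (2 * k)) ^ 2 := by
    calc ∫ w in sᶜ, (1 + ‖w‖ ^ 2)⁻¹ ^ 2 ∂μ ≤ (1 + (y ^ 2) ^ 2) ^ (-(4 - 7 / 2 : ℝ) / 2) * B :=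
          setIntegral_compl_closedBall_inv_one_add_norm_sq_sq_le hd (by norm_num) (sq_nonneg y)
      _ ≤ y⁻¹ * B := by
          refine mul_le_mul_of_nonneg_right ?_ (integral_nonneg fun w => by positivity)
          rw [show -(4 - 7 / 2 : ℝ) / 2 = -(1 / 4) by norm_num]
          exact one_add_sq_sq_rpow_neg_quarter_le_inv hy
      _ ≤ (1 / (2 * k)) ^ 2 := by
          rw [inv_mul_le_iff₀ hy]
          field_simp
          linarith
  have htail : ∫ w in sᶜ, G w ∂μ ≤ 1 / 2 := by
    calc ∫ w in sᶜ, G w ∂μ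
        ≤ √(∫ w in sᶜ, (1 + ‖w‖ ^ 2)⁻¹ ^ 2 ∂μ) * √(∫ w, ((1 + ‖w‖ ^ 2) * G w) ^ 2 ∂μ) :=
          setIntegral_le_sqrt_mul_sqrt_of_pos hG0 (fun w => by positivity) (by fun_prop) hG.1
            (integrable_inv_one_add_norm_sq_sq (by linarith)).integrableOn hGw
      _ ≤ 1 / (2 * k) * k := by
          gcongr
          exact (Real.sqrt_le_sqrt hweight).trans_eq (Real.sqrt_sq (by positivity))
      _ = 1 / 2 := by field_simp
  linarith [integral_add_compl (measurableSet_closedBall : MeasurableSet s) hG]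

end HaarMeasure

lemma jap_sq (v : E3) : jap v ^ 2 = 1 + ‖v‖ ^ 2 := Real.sq_sqrt (by positivity)

lemma one_le_jap (v : E3) : 1 ≤ jap v := Real.one_le_sqrt.2 (by linarith [sq_nonneg ‖v‖])

lemma norm_le_jap (v : E3) : ‖v‖ ≤ jap v := Real.le_sqrt_of_sq_le (by linarith)

/-- Non-perturbative lower bound `∫ G(v−v')/|v'| dv' ≥ 1/(C k^m ⟨v⟩)` for a
probability density `G`, with `k = max{1, ‖⟨·⟩²G‖_{L²}}`. -/
theorem stmt_4 :
    ∃ C > (0:ℝ), ∃ m : ℕ, ∀ G : E3 → ℝ, Measurable G → (∀ v, 0 ≤ G v) →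
      Integrable G → (∫ v : E3, G v) = 1 →
      Integrable (fun v : E3 => (jap v ^ 2 * G v) ^ 2) →
      ∀ v : E3,
        1 / (C * max 1 (Real.sqrt (∫ w : E3, (jap w ^ 2 * G w) ^ 2)) ^ m * jap v) ≤
          ∫ w : E3, G (v - w) / ‖w‖ := by
  set B := ∫ w : E3, (1 + ‖w‖ ^ 2) ^ (-(7 / 2 : ℝ) / 2)
  have hB : 0 ≤ B := integral_nonneg fun w => by positivity
  refine ⟨2 * (1 + (4 * (B + 1)) ^ 2), by positivity, 4, fun G _ hG0 hG hG1 hGw v => ?_⟩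
  simp only [jap_sq] at hGw ⊢
  set k := max 1 √(∫ w : E3, ((1 + ‖w‖ ^ 2) * G w) ^ 2)
  have hk : 1 ≤ k := le_max_left _ _
  set y := 4 * (B + 1) * k ^ 2
  have hy : 0 < y := mul_pos (by linarith) (by positivity)
  have hG2 : Integrable (fun w => G w ^ 2) := hGw.mono' (hG.1.pow 2) (ae_of_all _ fun w => by
    rw [Real.norm_eq_abs, abs_sq, mul_pow]
    exact le_mul_of_one_le_left (sq_nonneg _) (one_le_pow₀ (by linarith [sq_nonneg ‖w‖])))
  have hmass : 1 / 2 ≤ ∫ w in closedBall (0 : E3) (y ^ 2), G w :=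
    half_le_setIntegral_closedBall (k := k) (y := y) (by simp; norm_num) hG0 hG hG1 hGw
      (by linarith) (le_max_right _ _) hy
      (show 4 * k ^ 2 * B ≤ 4 * (B + 1) * k ^ 2 by nlinarith [sq_nonneg k])
  have hconv : Integrable (fun w => G (v - w) / ‖w‖) :=
    integrable_div_norm_of_sq (by simp) (hG.comp_sub_left v) (hG2.comp_sub_left v)
  calc 1 / (2 * (1 + (4 * (B + 1)) ^ 2) * k ^ 4 * jap v) ≤ 1 / (2 * (‖v‖ + y ^ 2)) := by
        refine one_div_le_one_div_of_le (by positivity) ?_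
        nlinarith [norm_le_jap v, one_le_jap v, one_le_pow₀ (n := 4) hk]
    _ = 1 / 2 / (‖v‖ + y ^ 2) := by rw [div_div]
    _ ≤ (∫ w in closedBall (0 : E3) (y ^ 2), G w) / (‖v‖ + y ^ 2) := by gcongr
    _ ≤ _ := setIntegral_closedBall_div_le_integral_div_norm hG0 hG v hconv _

end
end

section
/- There is an absolute constant C > 0 such that for every ε ∈ (0,1] and every ξ ∈ ℝ³: ε^{−1} Σ_{i,j} σ_{ij}(ξ/ε) ξ_i ξ_j ≤ C ε ⟨ξ/ε⟩^{−1}; in particular this quantity is bounded by C·min{ε, ε²/|ξ|} for ξ ≠ 0. -/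
open MeasureTheory Real

noncomputable section

/-! Writing `z = v - w`, the form `Φ(z) v · v = (|z|²|v|² - (z·v)²) / |z|³` is unchanged when `v` is
replaced by `w = v - z`, so the integrand of `σ(v) v · v` is at most `|w|² μ(w) / |v - w|`.
Splitting `1 + |v| ≤ (1 + |w|) + |v - w|`, the weight `1 + |v|` costs only a Gaussian moment of `μ`
plus a term in which `|v - w|` cancels the singularity, while `|v - w|⁻¹` is integrable near `v`
uniformly in `v`. Hence `σ(v) v · v ≲ (1 + |v|)⁻¹ ≤ ⟨v⟩⁻¹`, and the theorem is this bound at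
`v = ξ / ε`, the form being quadratic in `ξ`. -/

open scoped InnerProductSpace

def phiForm (z u : E3) : ℝ := ∑ i, ∑ j, Phi z i j * u i * u j

lemma phiForm_eq (z u : E3) : phiForm z u = ‖u‖ ^ 2 / ‖z‖ - ⟪z, u⟫_ℝ ^ 2 / ‖z‖ ^ 3 := by
  simp only [phiForm, Phi, EuclideanSpace.real_norm_sq_eq, PiLp.inner_apply, RCLike.inner_apply,
    conj_trivial, Fin.sum_univ_three, Fin.isValue, Fin.reduceEq, ↓reduceIte]
  ring

lemma phiForm_nonneg (z u : E3) : 0 ≤ phiForm z u := by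
  rcases eq_or_ne z 0 with rfl | hz
  · simp [phiForm_eq]
  have hz' : 0 < ‖z‖ := norm_pos_iff.mpr hz
  have cs : ⟪z, u⟫_ℝ ^ 2 ≤ ‖z‖ ^ 2 * ‖u‖ ^ 2 := by
    simpa [sq, real_inner_self_eq_norm_sq] using real_inner_mul_inner_self_le z u
  rw [phiForm_eq, sub_nonneg, div_le_div_iff₀ (by positivity) hz']
  nlinarith

lemma phiForm_le (z u : E3) : phiForm z u ≤ ‖u‖ ^ 2 / ‖z‖ := by
  rw [phiForm_eq]
  exact sub_le_self _ (by positivity)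

lemma phiForm_add_self (z u : E3) : phiForm z (u + z) = phiForm z u := by
  rcases eq_or_ne z 0 with rfl | hz
  · simp [phiForm_eq]
  have hz' : ‖z‖ ≠ 0 := norm_ne_zero_iff.mpr hz
  have hsq : ‖u + z‖ ^ 2 = ‖u‖ ^ 2 + 2 * ⟪z, u⟫_ℝ + ‖z‖ ^ 2 := by
    rw [norm_add_sq_real, real_inner_comm]
  rw [phiForm_eq, phiForm_eq, hsq, inner_add_right, real_inner_self_eq_norm_sq]
  field_simp
  ring

lemma phiForm_sub_le (v w : E3) : phiForm (v - w) v ≤ ‖w‖ ^ 2 / ‖v - w‖ := by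
  calc phiForm (v - w) v = phiForm (v - w) (w + (v - w)) := by rw [add_sub_cancel]
    _ = phiForm (v - w) w := phiForm_add_self _ _
    _ ≤ ‖w‖ ^ 2 / ‖v - w‖ := phiForm_le _ _

lemma abs_Phi_le (z : E3) (i j : Fin 3) : |Phi z i j| ≤ 2 / ‖z‖ := by
  rcases eq_or_ne z 0 with rfl | hz
  · simp [Phi]
  have hz' : 0 < ‖z‖ := norm_pos_iff.mpr hz
  have hδ : |(if i = j then (1 : ℝ) else 0)| ≤ 1 := by split_ifs <;> simp
  calc |Phi z i j| ≤ |(if i = j then (1 : ℝ) else 0) / ‖z‖| + |z i * z j / ‖z‖ ^ 3| :=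
        abs_sub _ _
    _ = |(if i = j then (1 : ℝ) else 0)| / ‖z‖ + |z i| * |z j| / ‖z‖ ^ 3 := by
        simp only [abs_div, abs_mul, abs_pow, abs_norm]
    _ ≤ 1 / ‖z‖ + ‖z‖ * ‖z‖ / ‖z‖ ^ 3 := by
        gcongr <;> simpa using PiLp.norm_apply_le z _
    _ = 2 / ‖z‖ := by field_simp; ring

lemma measurable_Phi (i j : Fin 3) : Measurable fun z => Phi z i j := by
  unfold Phi; fun_prop

section InvNormBall

open Metric

variable {E : Type*} [NormedAddCommGroup E]

def ballInvNorm (z : E) : ℝ := (ball (0 : E) 1).indicator (fun z => ‖z‖⁻¹) z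

lemma ballInvNorm_nonneg (z : E) : 0 ≤ ballInvNorm z :=
  Set.indicator_nonneg (fun _ _ => by positivity) z

lemma integrable_ballInvNorm [NormedSpace ℝ E] [FiniteDimensional ℝ E] [MeasurableSpace E]
    [BorelSpace E] (μ : Measure E) [μ.IsAddHaarMeasure]
    (hE : 1 < Module.finrank ℝ E) : Integrable ballInvNorm μ := by
  refine (integrable_indicator_iff measurableSet_ball).mpr ?_
  refine integrableOn_ball_of_norm_le_rpow (C := 1) (α := 1) hE.le (by exact_mod_cast hE)
    (Filter.Eventually.of_forall fun z => ?_) (by fun_prop)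
  simp [Real.rpow_neg_one]

lemma div_norm_le_ballInvNorm_add {a : ℝ} (ha0 : 0 ≤ a) (ha1 : a ≤ 1) (z : E) :
    a / ‖z‖ ≤ ballInvNorm z + a := by
  by_cases hz : z ∈ ball (0 : E) 1
  · rw [ballInvNorm, Set.indicator_of_mem hz, div_eq_mul_inv]
    nlinarith [inv_nonneg.mpr (norm_nonneg z)]
  · rw [ballInvNorm, Set.indicator_of_notMem hz, zero_add]
    exact div_le_self ha0 (by simpa using hz)

end InvNormBall

lemma integrable_exp_neg_mul_norm_sq {V : Type*} [NormedAddCommGroup V] [InnerProductSpace ℝ V]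
    [FiniteDimensional ℝ V] [MeasurableSpace V] [BorelSpace V] {b : ℝ} (hb : 0 < b) :
    Integrable (fun w : V => rexp (-b * ‖w‖ ^ 2)) := by
  have := (GaussianFourier.integrable_cexp_neg_mul_sq_norm_add (V := V) (b := b)
    (by simpa using hb) 0 0).norm
  refine this.congr (Filter.Eventually.of_forall fun w => ?_)
  simp [Complex.norm_exp, ← Complex.ofReal_pow]

lemma maxw_one_nonneg (w : E3) : 0 ≤ maxw 1 w := by
  unfold maxw; positivity

lemma maxw_one_le_exp (w : E3) : maxw 1 w ≤ rexp (-(1 / 2) * ‖w‖ ^ 2) := by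
  have hc : (1 / (2 * π)) ^ ((3 : ℝ) / 2) ≤ 1 :=
    Real.rpow_le_one (by positivity)
      ((div_le_one (by positivity)).mpr (by linarith [pi_gt_three])) (by norm_num)
  calc maxw 1 w ≤ 1 * rexp (-1 * ‖w‖ ^ 2 / 2) := by
        unfold maxw; gcongr
    _ = rexp (-(1 / 2) * ‖w‖ ^ 2) := by ring_nf

lemma one_add_mul_sq_mul_exp_le (r : ℝ) :
    (1 + r) * r ^ 2 * rexp (-(1 / 2) * r ^ 2) ≤ 32 * rexp (-(1 / 4) * r ^ 2) := by
  have hsplit : rexp (-(1 / 2) * r ^ 2) = rexp (-(1 / 4) * r ^ 2) * rexp (-(1 / 4) * r ^ 2) := by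
    rw [← exp_add]; ring_nf
  have hinv : rexp (-(1 / 4) * r ^ 2) * rexp (r ^ 2 / 4) = 1 := by
    rw [← exp_add]; ring_nf; exact exp_zero
  have hquad := quadratic_le_exp_of_nonneg (by positivity : 0 ≤ r ^ 2 / 4)
  have hpoly : (1 + r) * r ^ 2 ≤ 32 * rexp (r ^ 2 / 4) := by
    nlinarith [sq_nonneg (r ^ 2 - r), sq_nonneg r, sq_nonneg (r - 1)]
  have hG := exp_pos (-(1 / 4) * r ^ 2)
  rw [hsplit, ← mul_assoc]
  gcongr
  nlinarith

lemma exp_neg_mul_sq_le_one {b : ℝ} (hb : 0 ≤ b) (r : ℝ) : rexp (-b * r ^ 2) ≤ 1 :=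
  exp_le_one_iff.mpr (by nlinarith [sq_nonneg r])

lemma abs_Phi_sub_mul_maxw_le (v w : E3) (i j : Fin 3) :
    |Phi (v - w) i j * maxw 1 w| ≤ 2 * (ballInvNorm (v - w) + rexp (-(1 / 2) * ‖w‖ ^ 2)) := by
  rw [abs_mul, abs_of_nonneg (maxw_one_nonneg w)]
  calc |Phi (v - w) i j| * maxw 1 w ≤ 2 / ‖v - w‖ * rexp (-(1 / 2) * ‖w‖ ^ 2) :=
        mul_le_mul (abs_Phi_le _ i j) (maxw_one_le_exp w) (maxw_one_nonneg w) (by positivity)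
    _ = 2 * (rexp (-(1 / 2) * ‖w‖ ^ 2) / ‖v - w‖) := by ring
    _ ≤ 2 * (ballInvNorm (v - w) + rexp (-(1 / 2) * ‖w‖ ^ 2)) := by
        gcongr
        exact div_norm_le_ballInvNorm_add (exp_pos _).le (exp_neg_mul_sq_le_one (by norm_num) _) _

lemma one_add_norm_mul_phiForm_mul_maxw_le (v w : E3) :
    (1 + ‖v‖) * (phiForm (v - w) v * maxw 1 w) ≤
      32 * (ballInvNorm (v - w) + 2 * rexp (-(1 / 4) * ‖w‖ ^ 2)) := by
  have hQ := phiForm_sub_le v w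
  set z := v - w
  set G := rexp (-(1 / 4) * ‖w‖ ^ 2)
  have hQ0 := phiForm_nonneg z v
  have hμ0 := maxw_one_nonneg w
  have hQz : ‖z‖ * phiForm z v ≤ ‖w‖ ^ 2 := by
    rcases eq_or_ne ‖z‖ 0 with h | h
    · rw [h, zero_mul]; positivity
    · calc ‖z‖ * phiForm z v ≤ ‖z‖ * (‖w‖ ^ 2 / ‖z‖) := by gcongr
        _ = ‖w‖ ^ 2 := by field_simp
  have hv : 1 + ‖v‖ ≤ (1 + ‖w‖) + ‖z‖ := by
    linarith [norm_le_norm_add_norm_sub' v w]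
  have hP : (1 + ‖w‖) * ‖w‖ ^ 2 * maxw 1 w ≤ 32 * G :=
    (mul_le_mul_of_nonneg_left (maxw_one_le_exp w) (by positivity)).trans
      (one_add_mul_sq_mul_exp_le ‖w‖)
  have hw : ‖w‖ ^ 2 * maxw 1 w ≤ 32 * G := by
    nlinarith [mul_nonneg (norm_nonneg w) (mul_nonneg (sq_nonneg ‖w‖) hμ0)]
  calc (1 + ‖v‖) * (phiForm z v * maxw 1 w)
      ≤ ((1 + ‖w‖) * phiForm z v + ‖z‖ * phiForm z v) * maxw 1 w := by
        rw [← add_mul, ← mul_assoc]; gcongr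
    _ ≤ ((1 + ‖w‖) * (‖w‖ ^ 2 / ‖z‖) + ‖w‖ ^ 2) * maxw 1 w := by gcongr
    _ = (1 + ‖w‖) * ‖w‖ ^ 2 * maxw 1 w / ‖z‖ + ‖w‖ ^ 2 * maxw 1 w := by ring
    _ ≤ 32 * G / ‖z‖ + 32 * G := by gcongr
    _ ≤ 32 * (ballInvNorm z + 2 * G) := by
        have := div_norm_le_ballInvNorm_add (exp_pos _).le (exp_neg_mul_sq_le_one
          (by norm_num : (0 : ℝ) ≤ 1 / 4) ‖w‖) z
        rw [mul_div_assoc]; linarith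

lemma integrable_Phi_sub_mul_maxw (v : E3) (i j : Fin 3) :
    Integrable fun w => Phi (v - w) i j * maxw 1 w := by
  have hmaj : Integrable fun w => 2 * (ballInvNorm (v - w) + rexp (-(1 / 2) * ‖w‖ ^ 2)) :=
    (((integrable_ballInvNorm volume (by simp)).comp_sub_left v).add
      (integrable_exp_neg_mul_norm_sq (by norm_num))).const_mul 2
  have hmeas : Measurable fun w => Phi (v - w) i j * maxw 1 w := by
    unfold maxw
    exact ((measurable_Phi i j).comp (measurable_const.sub measurable_id)).mul (by fun_prop)
  exact hmaj.mono' hmeas.aestronglyMeasurable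
    (Filter.Eventually.of_forall fun w => abs_Phi_sub_mul_maxw_le v w i j)

lemma sigmaM_quadForm_eq_integral (v : E3) :
    ∑ i, ∑ j, sigmaM i j v * v i * v j = ∫ w, phiForm (v - w) v * maxw 1 w := by
  have hint (i j : Fin 3) : Integrable fun w => Phi (v - w) i j * v i * v j * maxw 1 w :=
    ((integrable_Phi_sub_mul_maxw v i j).mul_const (v i * v j)).congr
      (Filter.Eventually.of_forall fun w => by ring)
  simp_rw [phiForm, Finset.sum_mul]
  rw [integral_finsetSum _ fun i _ => integrable_finsetSum _ fun j _ => hint i j]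
  refine Finset.sum_congr rfl fun i _ => ?_
  rw [integral_finsetSum _ fun j _ => hint i j]
  refine Finset.sum_congr rfl fun j _ => ?_
  rw [sigmaM, convPhi, mul_assoc, ← integral_mul_const]
  congr 1 with w
  ring

lemma exists_one_add_norm_mul_sigmaM_quadForm_le :
    ∃ C > 0, ∀ v : E3, (1 + ‖v‖) * ∑ i, ∑ j, sigmaM i j v * v i * v j ≤ C := by
  have hJ : Integrable (ballInvNorm : E3 → ℝ) := integrable_ballInvNorm volume (by simp)
  have hG : Integrable fun w : E3 => rexp (-(1 / 4) * ‖w‖ ^ 2) :=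
    integrable_exp_neg_mul_norm_sq (by norm_num)
  set K := 32 * ((∫ z : E3, ballInvNorm z) + 2 * ∫ w : E3, rexp (-(1 / 4) * ‖w‖ ^ 2))
  have hK : 0 ≤ K := by
    have : 0 ≤ ∫ z : E3, ballInvNorm z := integral_nonneg ballInvNorm_nonneg
    have : 0 ≤ ∫ w : E3, rexp (-(1 / 4) * ‖w‖ ^ 2) := integral_nonneg fun w => (exp_pos _).le
    positivity
  refine ⟨K + 1, by positivity, fun v => ?_⟩
  have hmaj : Integrable fun w => 32 * (ballInvNorm (v - w) + 2 * rexp (-(1 / 4) * ‖w‖ ^ 2)) :=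
    ((hJ.comp_sub_left v).add (hG.const_mul 2)).const_mul 32
  calc (1 + ‖v‖) * ∑ i, ∑ j, sigmaM i j v * v i * v j
      = ∫ w, (1 + ‖v‖) * (phiForm (v - w) v * maxw 1 w) := by
        rw [sigmaM_quadForm_eq_integral, integral_const_mul]
    _ ≤ ∫ w, 32 * (ballInvNorm (v - w) + 2 * rexp (-(1 / 4) * ‖w‖ ^ 2)) :=
        integral_mono_of_nonneg
          (Filter.Eventually.of_forall fun w =>
            mul_nonneg (by positivity) (mul_nonneg (phiForm_nonneg _ v) (maxw_one_nonneg w)))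
          hmaj (Filter.Eventually.of_forall (one_add_norm_mul_phiForm_mul_maxw_le v))
    _ = K := by
        rw [integral_const_mul, integral_add (hJ.comp_sub_left v) (hG.const_mul 2),
          integral_sub_left_eq_self, integral_const_mul]
    _ ≤ K + 1 := by linarith

lemma div_jap_smul_le_min {ε : ℝ} (hε : 0 < ε) {ξ : E3} (hξ : ξ ≠ 0) :
    ε / jap (ε⁻¹ • ξ) ≤ min ε (ε ^ 2 / ‖ξ‖) := by
  set v := ε⁻¹ • ξ
  have hv : ‖v‖ = ‖ξ‖ / ε := by
    rw [norm_smul, norm_inv, Real.norm_of_nonneg hε.le, inv_mul_eq_div]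
  have hξ' : 0 < ‖ξ‖ := norm_pos_iff.mpr hξ
  refine le_min (div_le_self hε.le (Real.one_le_sqrt.mpr (by simp))) ?_
  calc ε / jap v ≤ ε / ‖v‖ := by
        gcongr
        · rw [hv]; positivity
        · exact Real.le_sqrt_of_sq_le (by simp)
    _ = ε ^ 2 / ‖ξ‖ := by rw [hv]; field_simp

/-- Degeneracy of the rescaled dissipation:
`ε⁻¹ ξ·σ(ξ/ε)ξ ≤ C ε ⟨ξ/ε⟩⁻¹ ≤ C min{ε, ε²/|ξ|}`. -/
theorem stmt_7 :
    ∃ C > (0:ℝ), ∀ ε ∈ Set.Ioc (0:ℝ) 1, ∀ ξ : E3,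
      ε⁻¹ * (∑ i, ∑ j, sigmaM i j (ε⁻¹ • ξ) * ξ i * ξ j) ≤ C * ε / jap (ε⁻¹ • ξ) ∧
      (ξ ≠ 0 → ε⁻¹ * (∑ i, ∑ j, sigmaM i j (ε⁻¹ • ξ) * ξ i * ξ j) ≤
        C * min ε (ε ^ 2 / ‖ξ‖)) := by
  obtain ⟨C, hC, hσ⟩ := exists_one_add_norm_mul_sigmaM_quadForm_le
  refine ⟨C, hC, fun ε ⟨hε, _⟩ ξ => ?_⟩
  set v := ε⁻¹ • ξ
  have hξ : ξ = ε • v := (smul_inv_smul₀ hε.ne' ξ).symm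
  have hscale : ε⁻¹ * (∑ i, ∑ j, sigmaM i j v * ξ i * ξ j) =
      ε * ∑ i, ∑ j, sigmaM i j v * v i * v j := by
    simp only [hξ, PiLp.smul_apply, smul_eq_mul, Finset.mul_sum]
    field_simp
  have hbound : ε⁻¹ * (∑ i, ∑ j, sigmaM i j v * ξ i * ξ j) ≤ C * ε / jap v := by
    have hσv : ∑ i, ∑ j, sigmaM i j v * v i * v j ≤ C / (1 + ‖v‖) := by
      rw [le_div_iff₀ (by positivity), mul_comm]
      exact hσ v
    calc ε⁻¹ * (∑ i, ∑ j, sigmaM i j v * ξ i * ξ j)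
        = ε * ∑ i, ∑ j, sigmaM i j v * v i * v j := hscale
      _ ≤ ε * (C / jap v) := by
        gcongr
        exact hσv.trans (div_le_div_of_nonneg_left hC.le (sqrt_pos.mpr (by positivity))
          (sqrt_one_add_norm_sq_le v))
      _ = C * ε / jap v := by ring
  refine ⟨hbound, fun hξ0 => hbound.trans ?_⟩
  rw [mul_div_assoc]
  exact mul_le_mul_of_nonneg_left (div_jap_smul_le_min hε hξ0) hC.le

end
end

section
/- Let h : ℝ³ \ {0} → ℝ be a function such that for all linearly independent ξ, ξ' ∈ ℝ³ the vector h(ξ)ξ − h(ξ')ξ' lies in span{ξ − ξ'}. Then h is constant on ℝ³ \ {0}. -/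
/-
Comparing coefficients, linear independence of `ξ, ξ'` forces `h ξ = c = h ξ'`. Any two nonzero
vectors of ℝ³ are then linked through a third vector independent of each of them, which exists
because two vectors cannot span a space of dimension `3`.
-/

open MeasureTheory Real

noncomputable section

theorem LinearIndependent.eq_of_smul_sub_smul_eq_smul_sub {R M : Type*} [Ring R] [AddCommGroup M]
    [Module R M] {x y : M} (hxy : LinearIndependent R ![x, y]) {a b c : R}
    (h : a • x - b • y = c • (x - y)) : a = b := by
  have hsum : (a - c) • x + (c - b) • y = 0 := by
    rw [sub_smul, sub_smul, ← sub_eq_zero.mpr h, smul_sub]; abel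
  obtain ⟨hac, hcb⟩ := LinearIndependent.pair_iff.mp hxy _ _ hsum
  exact (sub_eq_zero.mp hac).trans (sub_eq_zero.mp hcb)

theorem exists_notMem_span_pair {K V : Type*} [DivisionRing K] [AddCommGroup V] [Module K V]
    (hV : 2 < Module.finrank K V) (x y : V) : ∃ z, z ∉ Submodule.span K {x, y} := by
  by_contra! hall
  have htop : Submodule.span K {x, y} = ⊤ := Submodule.eq_top_iff'.mpr hall
  have hle : Module.finrank K (Submodule.span K (Set.range ![x, y])) ≤ 2 :=
    (finrank_range_le_card ![x, y]).trans_eq (Fintype.card_fin 2)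
  rw [Matrix.range_cons_cons_empty, htop, finrank_top] at hle
  omega

theorem exists_linearIndependent_pair_of_two_lt_finrank {K V : Type*} [DivisionRing K]
    [AddCommGroup V] [Module K V] (hV : 2 < Module.finrank K V) {x y : V} (hx : x ≠ 0)
    (hy : y ≠ 0) :
    ∃ z, LinearIndependent K ![x, z] ∧ LinearIndependent K ![y, z] := by
  obtain ⟨z, hz⟩ := exists_notMem_span_pair hV x y
  refine ⟨z, (LinearIndependent.pair_iff' hx).mpr fun a ha => hz ?_,
    (LinearIndependent.pair_iff' hy).mpr fun a ha => hz ?_⟩ <;>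
    exact ha ▸ Submodule.smul_mem _ a (Submodule.subset_span (by simp))

/-- If `h(ξ)ξ − h(ξ')ξ' ∈ span{ξ − ξ'}` for all linearly independent `ξ, ξ'`, then
`h` is constant away from the origin. -/
theorem stmt_10 (h : E3 → ℝ)
    (H : ∀ ξ ξ' : E3, LinearIndependent ℝ ![ξ, ξ'] →
      ∃ c : ℝ, h ξ • ξ - h ξ' • ξ' = c • (ξ - ξ')) :
    ∀ ξ ξ' : E3, ξ ≠ 0 → ξ' ≠ 0 → h ξ = h ξ' := by
  have h_eq_of_indep : ∀ ξ ξ' : E3, LinearIndependent ℝ ![ξ, ξ'] → h ξ = h ξ' := fun ξ ξ' hind =>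
    (H ξ ξ' hind).elim fun _ hc => hind.eq_of_smul_sub_smul_eq_smul_sub hc
  intro ξ ξ' hξ hξ'
  have hdim : 2 < Module.finrank ℝ E3 := by simp
  obtain ⟨η, hξη, hξ'η⟩ := exists_linearIndependent_pair_of_two_lt_finrank hdim hξ hξ'
  rw [h_eq_of_indep ξ η hξη, h_eq_of_indep ξ' η hξ'η]

end
end

section
/- Let F : ℝ³ → (0,∞) be continuously differentiable and suppose: (i) Φ(ξ) ∇(ln F)(ξ) = 0 for every ξ ≠ 0, and (ii) Φ(ξ−ξ') (∇(ln F)(ξ) − ∇(ln F)(ξ')) = 0 for all ξ, ξ' ∈ ℝ³ with ξ ≠ ξ'. Then there exist β, ψ ∈ ℝ such that F(ξ) = exp(−β|ξ|²/2 + ψ) for all ξ ∈ ℝ³; i.e., F is a centered Maxwellian. -/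
open MeasureTheory Real

noncomputable section

/-! Since `Φ(z)` annihilates exactly `span {z}`, conditions (i) and (ii) say that `g = ∇ ln F`
satisfies `g ξ ∥ ξ` and `g ξ - g ξ' ∥ ξ - ξ'`. In dimension at least two this forces `g = c • id`:
for independent `x, y`, writing `a • x - b • y` as a multiple of `x - y` gives `a = b`, and a
dependent pair is compared through a third vector off their common line. Then `ln F - c ‖ξ‖² / 2`
has zero derivative, hence is constant. -/

section ParallelDifferences

open Submodule Module

variable {K V : Type*} [Field K] [AddCommGroup V] [Module K V]

theorem eq_of_linearIndependent_of_smul_sub_smul_mem_span {x y : V} {a b : K}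
    (hxy : LinearIndependent K ![x, y]) (h : a • x - b • y ∈ K ∙ (x - y)) : a = b := by
  obtain ⟨d, hd⟩ := mem_span_singleton.1 h
  have hcomb : (a - d) • x + (d - b) • y = 0 := by
    rw [sub_smul, sub_smul, ← sub_eq_zero.2 hd.symm, smul_sub]; abel
  obtain ⟨had, hdb⟩ := LinearIndependent.pair_iff.1 hxy _ _ hcomb
  exact (sub_eq_zero.1 had).trans (sub_eq_zero.1 hdb)

variable {g : V → V} (hV : 1 < finrank K V) (hrad : ∀ x, x ≠ 0 → g x ∈ K ∙ x)
  (hdiff : ∀ x y, x ≠ y → g x - g y ∈ K ∙ (x - y))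
include hV hrad hdiff

theorem eq_of_map_eq_smul_of_map_eq_smul {x y : V} {a b : K} (hx : x ≠ 0) (hy : y ≠ 0)
    (hgx : g x = a • x) (hgy : g y = b • y) : a = b := by
  have hindep : ∀ {x y : V} {a b : K}, LinearIndependent K ![x, y] →
      g x = a • x → g y = b • y → a = b := fun hxy hgx hgy =>
    eq_of_linearIndependent_of_smul_sub_smul_mem_span hxy <| hgx ▸ hgy ▸
      hdiff _ _ (by simpa using hxy.injective.ne (show (0 : Fin 2) ≠ 1 by decide))
  by_cases hxy : LinearIndependent K ![x, y]
  · exact hindep hxy hgx hgy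
  -- `y` is a multiple of `x`, so compare both with a vector `z` off their common line.
  obtain ⟨t, rfl⟩ : ∃ t : K, t • x = y := by
    simpa [LinearIndependent.pair_iff' hx] using hxy
  have ht : t ≠ 0 := by rintro rfl; simp at hy
  obtain ⟨z, hxz⟩ := exists_linearIndependent_pair_of_one_lt_finrank hV hx
  obtain ⟨c, hc⟩ := mem_span_singleton.1 (hrad z (hxz.ne_zero 1))
  have htz : LinearIndependent K ![t • x, z] := by
    simpa using (LinearIndependent.pair_smul_smul_iff ht.isUnit isUnit_one).2 hxz
  exact (hindep hxz hgx hc.symm).trans (hindep htz hgy hc.symm).symm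

theorem map_zero_of_sub_mem_span : g 0 = 0 := by
  have h0 : ∀ x, x ≠ 0 → g 0 ∈ K ∙ x := fun x hx => by
    have hx0 := hdiff x 0 hx
    rw [sub_zero] at hx0
    simpa only [sub_sub_cancel] using sub_mem (hrad x hx) hx0
  have : Nontrivial V := nontrivial_of_finrank_pos (zero_lt_one.trans hV)
  obtain ⟨x, hx⟩ := exists_ne (0 : V)
  obtain ⟨z, hxz⟩ := exists_linearIndependent_pair_of_one_lt_finrank hV hx
  obtain ⟨s, hs⟩ := mem_span_singleton.1 (h0 x hx)
  obtain ⟨t, ht⟩ := mem_span_singleton.1 (h0 z (hxz.ne_zero 1))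
  obtain ⟨hs0, -⟩ :=
    LinearIndependent.pair_iff.1 hxz s (-t) (by rw [neg_smul, hs, ht, add_neg_cancel])
  rw [← hs, hs0, zero_smul]

theorem exists_forall_eq_smul_of_sub_mem_span : ∃ c : K, ∀ x, g x = c • x := by
  have : Nontrivial V := nontrivial_of_finrank_pos (zero_lt_one.trans hV)
  obtain ⟨x, hx⟩ := exists_ne (0 : V)
  obtain ⟨c, hc⟩ := mem_span_singleton.1 (hrad x hx)
  refine ⟨c, fun y => ?_⟩
  rcases eq_or_ne y 0 with rfl | hy
  · rw [map_zero_of_sub_mem_span hV hrad hdiff, smul_zero]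
  obtain ⟨b, hb⟩ := mem_span_singleton.1 (hrad y hy)
  rw [← hb, eq_of_map_eq_smul_of_map_eq_smul hV hrad hdiff hy hx hb.symm hc.symm]

end ParallelDifferences

theorem sum_Phi_mul_eq_projPerp_div (z u : E3) (i : Fin 3) :
    ∑ j, Phi z i j * u j = projPerp z u i / ‖z‖ := by
  have hinner : inner ℝ u z = ∑ j, z j * u j := by
    simp [PiLp.inner_apply]
  have hsum : ∑ j, z i * z j / ‖z‖ ^ 3 * u j = z i * (∑ j, z j * u j) / ‖z‖ ^ 3 := by
    rw [Finset.mul_sum, Finset.sum_div]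
    exact Finset.sum_congr rfl fun _ _ => by ring
  simp only [Phi, projPerp, projPar, hinner, sub_mul, Finset.sum_sub_distrib, ite_div, ite_mul,
    zero_div, zero_mul, Finset.sum_ite_eq, Finset.mem_univ, if_true, hsum, PiLp.sub_apply,
    PiLp.smul_apply, smul_eq_mul]
  rcases eq_or_ne ‖z‖ 0 with hz | hz
  · simp [hz]
  field_simp

theorem mem_span_of_sum_Phi_mul_eq_zero {z u : E3} (hz : z ≠ 0)
    (h : ∀ i, ∑ j, Phi z i j * u j = 0) : u ∈ ℝ ∙ z := by
  have hperp : projPerp z u = 0 := by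
    ext i
    simpa [sum_Phi_mul_eq_projPerp_div, hz] using h i
  rw [projPerp, sub_eq_zero] at hperp
  exact hperp ▸ Submodule.smul_mem _ _ (Submodule.mem_span_singleton_self z)

theorem eq_half_mul_norm_sq_add_of_gradient_eq_smul {E : Type*} [NormedAddCommGroup E]
    [InnerProductSpace ℝ E] [CompleteSpace E] {f : E → ℝ} {c : ℝ} (hf : Differentiable ℝ f)
    (hgrad : ∀ x, gradient f x = c • x) (x : E) : f x = c / 2 * ‖x‖ ^ 2 + f 0 := by
  have hderiv : ∀ x, HasFDerivAt (fun y => f y - c / 2 * ‖y‖ ^ 2) (0 : E →L[ℝ] ℝ) x := by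
    intro x
    have hfx := (hf x).hasGradientAt
    rw [hgrad, hasGradientAt_iff_hasFDerivAt] at hfx
    refine (hfx.sub ((hasStrictFDerivAt_norm_sq x).hasFDerivAt.const_smul (c / 2))).congr_fderiv ?_
    ext v
    simp only [map_smul, sub_apply, smul_apply, InnerProductSpace.toDual_apply_apply, smul_eq_mul,
      coe_innerSL_apply, nsmul_eq_mul, Nat.cast_ofNat, zero_apply]
    ring
  have := is_const_of_fderiv_eq_zero (fun y => (hderiv y).differentiableAt)
    (fun y => (hderiv y).fderiv) x 0
  simp only [norm_zero] at this
  linarith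

/-- Vanishing entropy dissipation forces a centered Maxwellian. -/
theorem stmt_11 (F : E3 → ℝ) (hpos : ∀ ξ, 0 < F ξ) (hC1 : ContDiff ℝ 1 F)
    (h1 : ∀ ξ : E3, ξ ≠ 0 → ∀ i,
      (∑ j, Phi ξ i j * gradient (fun x => Real.log (F x)) ξ j) = 0)
    (h2 : ∀ ξ ξ' : E3, ξ ≠ ξ' → ∀ i,
      (∑ j, Phi (ξ - ξ') i j *
        (gradient (fun x => Real.log (F x)) ξ j
          - gradient (fun x => Real.log (F x)) ξ' j)) = 0) :
    ∃ β ψ : ℝ, ∀ ξ : E3, F ξ = Real.exp (-β * ‖ξ‖ ^ 2 / 2 + ψ) := by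
  have hdim : 1 < Module.finrank ℝ E3 := by simp
  obtain ⟨c, hc⟩ := exists_forall_eq_smul_of_sub_mem_span hdim
    (fun ξ hξ => mem_span_of_sum_Phi_mul_eq_zero hξ (h1 ξ hξ))
    (fun ξ ξ' hne => mem_span_of_sum_Phi_mul_eq_zero (sub_ne_zero.2 hne)
      (by simpa using h2 ξ ξ' hne))
  have hlog : Differentiable ℝ (fun x => Real.log (F x)) :=
    (hC1.differentiable one_ne_zero).log fun x => (hpos x).ne'
  refine ⟨-c, Real.log (F 0), fun ξ => ?_⟩
  rw [← Real.exp_log (hpos ξ), eq_half_mul_norm_sq_add_of_gradient_eq_smul hlog hc ξ]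
  ring_nf
end
end
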